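/- Let (A,P), (A,Q) ∈ ℰ^N with A ≠ ∅ and (A,P) ⊒ (A,Q) (same first component). Then the interval [(A,Q),(A,P)] in ℰ^N is isomorphic to the interval [Q^{A^c}, P^{A^c}] in the lattice of partitions of A^c = N∖A, and consequently the Möbius function satisfies μ_{ℰ^N}((A,Q),(A,P)) = μ_{𝒫^{A^c}}(Q^{A^c}, P^{A^c}). -/

import Mathlib

open scoped BigOperators

/-- `modp n A` is the modular partition `P^A_⊥` of `Fin n` whose unique (possibly)
non-singleton block is `A`, all other blocks being singletons. -/
def modp (n : ℕ) (A : Set (Fin n)) : Setoid (Fin n) where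
  r x y := x = y ∨ (x ∈ A ∧ y ∈ A)
  iseqv := by
    refine ⟨fun _ => Or.inl rfl, ?_, ?_⟩
    · rintro x y (rfl | ⟨hx, hy⟩)
      · exact Or.inl rfl
      · exact Or.inr ⟨hy, hx⟩
    · rintro x y z (rfl | ⟨hx, hy⟩) h
      · exact h
      · rcases h with rfl | ⟨hy', hz⟩
        · exact Or.inr ⟨hx, hy⟩
        · exact Or.inr ⟨hx, hz⟩

/-- The product `X^N = 2^N × 𝒫^N` of the subset lattice and the partition lattice,
ordered componentwise. -/
abbrev XN (n : ℕ) := Set (Fin n) × Setoid (Fin n)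

/-- The closure operator `cl` on `X^N`:  `cl(∅,P) = (∅,P)` and, for `A ≠ ∅`,
`cl(A,P) = (Ā, P ⊔ P^A_⊥)` where `Ā` is the block of `P ⊔ P^A_⊥` containing `A`. -/
def EmbClosure (n : ℕ) (x : XN n) : XN n :=
  ({y | ∃ a ∈ x.1, (x.2 ⊔ modp n x.1) y a}, x.2 ⊔ modp n x.1)

/-- An embedded subset is a pair that coincides with its closure. -/
def IsEmbedded (n : ℕ) (x : XN n) : Prop := EmbClosure n x = x

/-- The lattice `ℰ^N` of embedded subsets, with the induced order. -/
abbrev Emb (n : ℕ) := {x : XN n // IsEmbedded n x}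

lemma modp_le_of_subsingleton {n : ℕ} {A : Set (Fin n)} (h : A.Subsingleton)
    (Q : Setoid (Fin n)) : modp n A ≤ Q := by
  rw [Setoid.le_def]
  intro x y hxy
  rcases hxy with rfl | ⟨hx, hy⟩
  · exact Q.refl' x
  · obtain rfl := h hx hy
    exact Q.refl' x

lemma modp_eq_bot_of_subsingleton {n : ℕ} {A : Set (Fin n)} (h : A.Subsingleton) :
    modp n A = ⊥ :=
  le_antisymm (modp_le_of_subsingleton h ⊥) bot_le

lemma embedded_empty (n : ℕ) (Q : Setoid (Fin n)) : IsEmbedded n (∅, Q) := by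
  unfold IsEmbedded EmbClosure
  refine Prod.ext ?_ ?_
  · simp
  · simpa using sup_eq_left.mpr (modp_le_of_subsingleton Set.subsingleton_empty Q)

lemma embedded_univ_top (n : ℕ) : IsEmbedded n (Set.univ, ⊤) := by
  unfold IsEmbedded EmbClosure
  refine Prod.ext ?_ ?_
  · ext y
    simp only [Set.mem_setOf_eq, Set.mem_univ, iff_true]
    exact ⟨y, trivial, Setoid.refl' _ y⟩
  · exact sup_eq_left.mpr le_top

lemma embedded_singleton (n : ℕ) (i : Fin n) : IsEmbedded n ({i}, ⊥) := by
  have hb : modp n ({i} : Set (Fin n)) = ⊥ :=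
    modp_eq_bot_of_subsingleton Set.subsingleton_singleton
  unfold IsEmbedded EmbClosure
  refine Prod.ext ?_ ?_
  · ext y
    simp only [Set.mem_setOf_eq, hb, sup_idem, Set.mem_singleton_iff]
    constructor
    · rintro ⟨a, ha, hrel⟩
      subst ha
      change ((⊥ : Setoid (Fin n)) ⊔ modp n {a}) y a at hrel
      rw [modp_eq_bot_of_subsingleton Set.subsingleton_singleton, sup_idem] at hrel
      first
        | simpa [Setoid.bot_def] using hrel
        | exact Setoid.bot_def ▸ hrel
        | exact hrel
    · rintro rfl
      exact ⟨y, rfl, Setoid.refl' _ y⟩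
  · simp [hb]

/-- The bottom element `(∅, P_⊥)` of `ℰ^N`. -/
def botE (n : ℕ) : Emb n := ⟨(∅, ⊥), embedded_empty n ⊥⟩

/-- The top element `(N, P^⊤)` of `ℰ^N`. -/
def topE (n : ℕ) : Emb n := ⟨(Set.univ, ⊤), embedded_univ_top n⟩

/-- The atom `({i}, P_⊥)` of `ℰ^N`. -/
def atomS (n : ℕ) (i : Fin n) : Emb n := ⟨({i}, ⊥), embedded_singleton n i⟩

/-- The atom `(∅, [ij])` of `ℰ^N`, where `[ij]` is the atom of the partition lattice
whose unique non-singleton block is the pair `{i, j}`. -/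
def atomP (n : ℕ) (i j : Fin n) : Emb n := ⟨(∅, modp n {i, j}), embedded_empty n _⟩

/-- A pair is an atom candidate: of the form `({i},P_⊥)` or `(∅,[ij])` with `i ≠ j`. -/
def IsAtomPair (n : ℕ) (a : XN n) : Prop :=
  (∃ i : Fin n, a = ({i}, ⊥)) ∨ ∃ i j : Fin n, i ≠ j ∧ a = (∅, modp n {i, j})

/-- The number of blocks `|P|` of a partition. -/
noncomputable def numBlocks {α : Type*} (P : Setoid α) : ℕ := P.classes.ncard

/-- The rank function `r(A,P) = (n − |P|) + min{|A|,1}` of `ℰ^N`. -/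
noncomputable def erank (n : ℕ) (x : XN n) : ℕ := (n - numBlocks x.2) + min x.1.ncard 1

/-- The partition `Q^S` of `S` induced by a partition `Q` of `N`. -/
def indPart {n : ℕ} (S : Set (Fin n)) (Q : Setoid (Fin n)) : Setoid S :=
  Setoid.comap Subtype.val Q

/-- `mu` is the Möbius function of the (finite) poset `α`. -/
def IsMobius {α : Type*} [PartialOrder α] (mu : α → α → ℤ) : Prop :=
  (∀ x, mu x x = 1) ∧
  (∀ x y, ¬x ≤ y → mu x y = 0) ∧
  (∀ x y, x < y → mu x y = -∑ᶠ z ∈ Set.Ico x y, mu x z)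

/-!
An embedded subset `(A, R)` is exactly a pair in which `A` is a block of `R` (or empty), so `R` is
recovered from the partition `R^{Aᶜ}` it induces on the complement. Hence `S ↦ (A, S ∪ {A})` is an
order embedding of the partitions of `Aᶜ` into `ℰ^N` whose range is the fibre over `A`; an interval
between two points of this fibre lies inside it, which gives the isomorphism of intervals. The
Möbius function is computed by a recursion inside the interval, so it is invariant under interval
isomorphisms.
-/

open Set

instance Setoid.instFinite {α : Type*} [Finite α] : Finite (Setoid α) :=
  Finite.of_injective (fun s : Setoid α => ⇑s) fun _ _ => Setoid.eq_iff_rel_eq.2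

section Mobius

variable {α β : Type*} [PartialOrder α] [PartialOrder β]

theorem IsMobius.apply_eq_of_orderIso [WellFoundedLT α] {mu1 : α → α → ℤ} {mu2 : β → β → ℤ}
    (h1 : IsMobius mu1) (h2 : IsMobius mu2) {x y : α} {u v : β} (e : Icc x y ≃o Icc u v) :
    mu1 x y = mu2 u v := by
  by_cases hxy : x ≤ y
  swap
  · have huv : ¬u ≤ v := fun huv => hxy ((e.symm ⟨u, le_rfl, huv⟩).2.1.trans (e.symm _).2.2)
    rw [h1.2.1 x y hxy, h2.2.1 u v huv]
  have huv : u ≤ v := (e ⟨x, le_rfl, hxy⟩).2.1.trans (e _).2.2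
  have : Fact (x ≤ y) := ⟨hxy⟩
  have : Fact (u ≤ v) := ⟨huv⟩
  have key : ∀ w : Icc x y, mu1 x w = mu2 u (e w) := by
    intro w
    induction w using WellFoundedLT.induction with
    | _ w ih =>
    rcases eq_or_ne w ⊥ with rfl | hw
    · rw [e.map_bot, Icc.coe_bot, Icc.coe_bot, h1.1, h2.1]
    have hxw : x < w := bot_lt_iff_ne_bot.2 hw
    have hue : u < e w := bot_lt_iff_ne_bot.2 (e.map_bot ▸ e.injective.ne hw)
    rw [h1.2.2 x w hxw, h2.2.2 u _ hue, ← image_subtype_val_Icc_Iio, ← image_subtype_val_Icc_Iio,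
      ← e.image_Iio, image_image, finsum_mem_image Subtype.val_injective.injOn,
      finsum_mem_image (g := fun z => (e z : β)) (Subtype.val_injective.comp e.injective).injOn]
    exact congrArg Neg.neg (finsum_mem_congr rfl ih)
  simpa [e.map_top] using key ⊤

end Mobius

section ExtendWithBlock

variable {α : Type*} (A : Set α)

def Setoid.extendWithBlock (S : Setoid ↥Aᶜ) : Setoid α where
  r x y := (x ∈ A ∧ y ∈ A) ∨ ∃ hx : x ∈ Aᶜ, ∃ hy : y ∈ Aᶜ, S ⟨x, hx⟩ ⟨y, hy⟩
  iseqv := by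
    refine ⟨fun x => ?_, ?_, ?_⟩
    · by_cases hx : x ∈ A
      · exact Or.inl ⟨hx, hx⟩
      · exact Or.inr ⟨hx, hx, S.refl' _⟩
    · rintro x y (⟨hx, hy⟩ | ⟨hx, hy, h⟩)
      · exact Or.inl ⟨hy, hx⟩
      · exact Or.inr ⟨hy, hx, S.symm' h⟩
    · rintro x y z (⟨hx, hy⟩ | ⟨hx, hy, h⟩) (⟨hy', hz⟩ | ⟨hy', hz, h'⟩)
      · exact Or.inl ⟨hx, hz⟩
      · exact absurd hy hy'
      · exact absurd hy' hy
      · exact Or.inr ⟨hx, hz, S.trans' h h'⟩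

variable {A}

theorem Setoid.comap_val_extendWithBlock (S : Setoid ↥Aᶜ) :
    (extendWithBlock A S).comap Subtype.val = S := by
  ext a b
  refine ⟨?_, fun h => Or.inr ⟨a.2, b.2, h⟩⟩
  rintro (⟨ha, -⟩ | ⟨_, _, h⟩)
  · exact absurd ha a.2
  · exact h

theorem Setoid.extendWithBlock_le_extendWithBlock {S S' : Setoid ↥Aᶜ} :
    extendWithBlock A S ≤ extendWithBlock A S' ↔ S ≤ S' := by
  refine ⟨fun h => ?_, fun h => ?_⟩
  · rw [← comap_val_extendWithBlock S, ← comap_val_extendWithBlock S']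
    exact fun _ _ hab => h hab
  · rintro x y (hA | ⟨hx, hy, hS⟩)
    · exact Or.inl hA
    · exact Or.inr ⟨hx, hy, h hS⟩

theorem Setoid.extendWithBlock_comap_val {R : Setoid α} (hA : ∀ x ∈ A, ∀ y ∈ A, R x y)
    (hAc : ∀ x y, R x y → x ∈ A → y ∈ A) :
    extendWithBlock A (R.comap Subtype.val) = R := by
  ext x y
  refine ⟨?_, fun h => ?_⟩
  · rintro (⟨hx, hy⟩ | ⟨_, _, h⟩)
    · exact hA x hx y hy
    · exact h
  by_cases hx : x ∈ A
  · exact Or.inl ⟨hx, hAc x y h hx⟩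
  · exact Or.inr ⟨hx, fun hy => hx (hAc y x (R.symm' h) hy), h⟩

end ExtendWithBlock

noncomputable def OrderEmbedding.iccOrderIso {α β : Type*} [Preorder α] [Preorder β]
    (f : α ↪o β) (a b : α) (h : Icc (f a) (f b) ⊆ range f) : Icc a b ≃o Icc (f a) (f b) where
  toEquiv := Equiv.ofBijective (fun z => ⟨f z, f.monotone z.2.1, f.monotone z.2.2⟩)
    ⟨fun _ _ hz => Subtype.ext (f.injective (congrArg Subtype.val hz)), by
      rintro ⟨_, hw⟩
      obtain ⟨z, rfl⟩ := h hw
      exact ⟨⟨z, f.le_iff_le.1 hw.1, f.le_iff_le.1 hw.2⟩, rfl⟩⟩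
  map_rel_iff' := f.le_iff_le

theorem isEmbedded_iff {n : ℕ} {A : Set (Fin n)} {R : Setoid (Fin n)} :
    IsEmbedded n (A, R) ↔ (∀ x ∈ A, ∀ y ∈ A, R x y) ∧ ∀ x y, R x y → x ∈ A → y ∈ A := by
  have hmodp : modp n A ≤ R ↔ ∀ x ∈ A, ∀ y ∈ A, R x y :=
    ⟨fun h x hx y hy => h (Or.inr ⟨hx, hy⟩), fun h => by
      rintro x y (rfl | ⟨hx, hy⟩)
      exacts [R.refl' x, h x hx y hy]⟩
  refine ⟨fun h => ?_, fun ⟨hA, hAc⟩ => ?_⟩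
  · have hsup : R ⊔ modp n A = R := congrArg Prod.snd h
    have hblock : {y | ∃ a ∈ A, R y a} = A := hsup ▸ congrArg Prod.fst h
    refine ⟨hmodp.1 (sup_eq_left.1 hsup), fun x y hxy hx => ?_⟩
    exact hblock ▸ ⟨x, hx, R.symm' hxy⟩
  · have hsup : R ⊔ modp n A = R := sup_eq_left.2 (hmodp.2 hA)
    refine Prod.ext ?_ hsup
    change {y | ∃ a ∈ A, (R ⊔ modp n A) y a} = A
    rw [hsup]
    ext y
    exact ⟨fun ⟨a, ha, hya⟩ => hAc a y (R.symm' hya) ha, fun hy => ⟨y, hy, R.refl' y⟩⟩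

/-- `S ↦ (A, S ∪ {A})`, whose range is the set of embedded subsets with first component `A`. -/
def embOfComplPartition (n : ℕ) (A : Set (Fin n)) : Setoid ↥Aᶜ ↪o Emb n :=
  OrderEmbedding.ofMapLEIff
    (fun S => ⟨(A, Setoid.extendWithBlock A S),
      isEmbedded_iff.2 ⟨fun _ hx _ hy => Or.inl ⟨hx, hy⟩, fun _ _ hxy hx =>
        hxy.elim And.right fun ⟨hx', _⟩ => absurd hx hx'⟩⟩)
    fun _ _ => (and_iff_right le_rfl).trans Setoid.extendWithBlock_le_extendWithBlock

theorem embOfComplPartition_indPart {n : ℕ} {A : Set (Fin n)} {R : Setoid (Fin n)}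
    (h : IsEmbedded n (A, R)) : embOfComplPartition n A (indPart Aᶜ R) = ⟨(A, R), h⟩ :=
  Subtype.ext <| Prod.ext rfl <|
    Setoid.extendWithBlock_comap_val (isEmbedded_iff.1 h).1 (isEmbedded_iff.1 h).2

theorem mem_range_embOfComplPartition {n : ℕ} {A : Set (Fin n)} {z : Emb n} (hz : z.1.1 = A) :
    z ∈ range (embOfComplPartition n A) := by
  obtain ⟨⟨B, R⟩, h⟩ := z
  subst hz
  exact ⟨_, embOfComplPartition_indPart h⟩

theorem interval_same_subset_general (n : ℕ) (A : Set (Fin n))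
    (P Q : Setoid (Fin n)) (hP : IsEmbedded n (A, P)) (hQ : IsEmbedded n (A, Q)) :
    Nonempty ({z : Emb n // (⟨(A, Q), hQ⟩ : Emb n) ≤ z ∧ z ≤ ⟨(A, P), hP⟩} ≃o
        Set.Icc (indPart Aᶜ Q) (indPart Aᶜ P)) ∧
    ∀ (mu1 : Emb n → Emb n → ℤ) (mu2 : Setoid ↥Aᶜ → Setoid ↥Aᶜ → ℤ),
      IsMobius mu1 → IsMobius mu2 →
      mu1 ⟨(A, Q), hQ⟩ ⟨(A, P), hP⟩ = mu2 (indPart Aᶜ Q) (indPart Aᶜ P) := by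
  have hIcc : Icc (embOfComplPartition n A (indPart Aᶜ Q)) (embOfComplPartition n A (indPart Aᶜ P))
      = Icc (⟨(A, Q), hQ⟩ : Emb n) ⟨(A, P), hP⟩ := by
    rw [embOfComplPartition_indPart hQ, embOfComplPartition_indPart hP]
  let e : Icc (⟨(A, Q), hQ⟩ : Emb n) ⟨(A, P), hP⟩ ≃o Icc (indPart Aᶜ Q) (indPart Aᶜ P) :=
    ((embOfComplPartition n A).iccOrderIso _ _
      (fun z hz => mem_range_embOfComplPartition (le_antisymm hz.2.1 hz.1.1))).trans
      (OrderIso.setCongr _ _ hIcc) |>.symm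
  exact ⟨⟨e⟩, fun mu1 mu2 h1 h2 => h1.apply_eq_of_orderIso h2 e⟩

theorem interval_same_subset (n : ℕ) (hn : 1 ≤ n) (A : Set (Fin n)) (hA : A ≠ ∅)
    (P Q : Setoid (Fin n)) (hP : IsEmbedded n (A, P)) (hQ : IsEmbedded n (A, Q))
    (hle : ((A, Q) : XN n) ≤ (A, P)) :
    Nonempty ({z : Emb n // (⟨(A, Q), hQ⟩ : Emb n) ≤ z ∧ z ≤ ⟨(A, P), hP⟩} ≃o
        Set.Icc (indPart Aᶜ Q) (indPart Aᶜ P)) ∧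
    ∀ (mu1 : Emb n → Emb n → ℤ) (mu2 : Setoid ↥Aᶜ → Setoid ↥Aᶜ → ℤ),
      IsMobius mu1 → IsMobius mu2 →
      mu1 ⟨(A, Q), hQ⟩ ⟨(A, P), hP⟩ = mu2 (indPart Aᶜ Q) (indPart Aᶜ P) :=
  interval_same_subset_general n A P Q hP hQ
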